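/- Let X be a random unitary n×n matrix taking finitely many values W₁,…,Wₖ with probabilities q(a), and let M be an n×n matrix, ρ a density matrix, U a unitary. Then the expected value E[tr(XρX†M)] satisfies |E[tr(XρX†M)] − tr(UρU†M)| ≤ (δ + 2‖W̄ − U‖)·‖M‖, where W̄ = Σₐ q(a)Wₐ and δ = Σₐ q(a)‖Wₐ − W̄‖². -/

import Mathlib

/-!
Cyclicity of the trace turns the left-hand side into `tr (ρ (S - U† M U))` with
`S = ∑ q a • W a† M W a`, and for a density matrix `|tr (ρ C)| ≤ ‖C‖`: writing `ρ = B† B`, the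
trace is a sum of terms `⟪b, C b⟫` over the columns `b` of `B†`, whose squared norms add up to `tr ρ`.
With `D a = W a - W̄`, the bias–variance identity `S = ∑ q a • D a† M D a + W̄† M W̄` bounds the
first part by `δ ‖M‖`, and `W̄† M W̄ - U† M U = (W̄ - U)† M W̄ + U† M (W̄ - U)` is bounded by
`2 ‖W̄ - U‖ ‖M‖` since `W̄` and `U` are contractions.
-/

open scoped Matrix.Norms.L2Operator ComplexOrder Kronecker
open Matrix Complex

/-- The positive semidefinite square root of a positive semidefinite matrix (as defined in the
older Mathlib, where it has since been removed). -/
noncomputable def Matrix.PosSemidef.sqrt {n : Type*} [Fintype n] [DecidableEq n] {A : Matrix n n ℂ}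
    (hA : A.PosSemidef) : Matrix n n ℂ :=
  hA.isHermitian.eigenvectorUnitary.1 * diagonal ((↑) ∘ (√·) ∘ hA.isHermitian.eigenvalues) *
    (star hA.isHermitian.eigenvectorUnitary : Matrix n n ℂ)

/-- The trace norm (sum of singular values) of a square complex matrix. -/
noncomputable def traceNorm {n : Type*} [Fintype n] [DecidableEq n] (A : Matrix n n ℂ) : ℝ :=
  ((Matrix.posSemidef_conjTranspose_mul_self A).sqrt.trace).re

section StarAlgebra

variable {ι 𝕜 A : Type*} [RCLike 𝕜]

theorem norm_sum_ofReal_smul_le_one {E : Type*} [SeminormedAddCommGroup E] [NormedSpace 𝕜 E]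
    {s : Finset ι} {w : ι → ℝ} (hw0 : ∀ a ∈ s, 0 ≤ w a) (hw1 : ∑ a ∈ s, w a = 1) {x : ι → E}
    (hx : ∀ a ∈ s, ‖x a‖ ≤ 1) : ‖∑ a ∈ s, (w a : 𝕜) • x a‖ ≤ 1 := by
  refine (norm_sum_le _ _).trans (hw1 ▸ Finset.sum_le_sum fun a ha => ?_)
  rw [norm_smul, RCLike.norm_ofReal, abs_of_nonneg (hw0 a ha)]
  exact mul_le_of_le_one_right (hw0 a ha) (hx a ha)

theorem sum_smul_star_sub_mul_mul_sub [Ring A] [StarRing A] [Algebra 𝕜 A] [StarModule 𝕜 A]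
    {s : Finset ι} {w : ι → ℝ} (hw1 : ∑ a ∈ s, w a = 1) {x : ι → A} {xbar : A}
    (hxbar : ∑ a ∈ s, (w a : 𝕜) • x a = xbar) (m : A) :
    ∑ a ∈ s, (w a : 𝕜) • (star (x a - xbar) * m * (x a - xbar))
      = ∑ a ∈ s, (w a : 𝕜) • (star (x a) * m * x a) - star xbar * m * xbar := by
  have hstar : ∑ a ∈ s, (w a : 𝕜) • star (x a) = star xbar := by
    simp only [← hxbar, star_sum, star_smul, RCLike.star_def, RCLike.conj_ofReal]
  have hw1' : ∑ a ∈ s, (w a : 𝕜) = 1 := by exact_mod_cast hw1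
  have hexpand : ∀ a, star (x a - xbar) * m * (x a - xbar) = star (x a) * m * x a
      - star xbar * m * x a - star (x a) * (m * xbar) + star xbar * m * xbar := by
    intro a; simp only [star_sub]; noncomm_ring
  have hleft : ∑ a ∈ s, (w a : 𝕜) • (star xbar * m * x a) = star xbar * m * xbar := by
    simp only [← hxbar, Finset.mul_sum, mul_smul_comm]
  have hright : ∑ a ∈ s, (w a : 𝕜) • (star (x a) * (m * xbar)) = star xbar * m * xbar := by
    simp only [← hstar, Finset.sum_mul, smul_mul_assoc, mul_assoc]
  simp only [hexpand, smul_add, smul_sub, Finset.sum_add_distrib, Finset.sum_sub_distrib]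
  rw [hleft, hright, ← Finset.sum_smul, hw1', one_smul, sub_add_cancel]

variable [NormedRing A] [StarRing A] [CStarRing A]

theorem norm_le_one_of_mem_unitary {u : A} (hu : u ∈ unitary A) : ‖u‖ ≤ 1 := by
  nontriviality A
  exact (CStarRing.norm_of_mem_unitary hu).le

theorem norm_star_mul_mul_le (c m d : A) : ‖star c * m * d‖ ≤ ‖c‖ * ‖m‖ * ‖d‖ :=
  norm_star c ▸ (norm_mul_le _ _).trans (by gcongr; exact norm_mul_le _ _)

theorem norm_star_mul_mul_sub_star_mul_mul_le (m a b : A) :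
    ‖star a * m * a - star b * m * b‖ ≤ ‖a - b‖ * ‖m‖ * (‖a‖ + ‖b‖) := by
  have h : star a * m * a - star b * m * b = star (a - b) * m * a + star b * m * (a - b) := by
    simp only [star_sub]; noncomm_ring
  rw [h]
  calc ‖star (a - b) * m * a + star b * m * (a - b)‖
      ≤ ‖a - b‖ * ‖m‖ * ‖a‖ + ‖b‖ * ‖m‖ * ‖a - b‖ :=
        (norm_add_le _ _).trans (add_le_add (norm_star_mul_mul_le _ _ _) (norm_star_mul_mul_le _ _ _))
    _ = ‖a - b‖ * ‖m‖ * (‖a‖ + ‖b‖) := by ring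

theorem norm_sum_smul_star_mul_mul_sub_le [NormedAlgebra 𝕜 A] [StarModule 𝕜 A]
    {s : Finset ι} {w : ι → ℝ} (hw0 : ∀ a ∈ s, 0 ≤ w a) (hw1 : ∑ a ∈ s, w a = 1) {x : ι → A}
    {xbar : A} (hxbar : ∑ a ∈ s, (w a : 𝕜) • x a = xbar) (m u : A) :
    ‖∑ a ∈ s, (w a : 𝕜) • (star (x a) * m * x a) - star u * m * u‖
      ≤ (∑ a ∈ s, w a * ‖x a - xbar‖ ^ 2) * ‖m‖ + ‖xbar - u‖ * ‖m‖ * (‖xbar‖ + ‖u‖) := by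
  have hsplit : ∑ a ∈ s, (w a : 𝕜) • (star (x a) * m * x a) - star u * m * u
      = ∑ a ∈ s, (w a : 𝕜) • (star (x a - xbar) * m * (x a - xbar))
        + (star xbar * m * xbar - star u * m * u) := by
    rw [sum_smul_star_sub_mul_mul_sub hw1 hxbar]; abel
  have hvar : ‖∑ a ∈ s, (w a : 𝕜) • (star (x a - xbar) * m * (x a - xbar))‖
      ≤ (∑ a ∈ s, w a * ‖x a - xbar‖ ^ 2) * ‖m‖ := by
    rw [Finset.sum_mul]
    refine (norm_sum_le _ _).trans (Finset.sum_le_sum fun a ha => ?_)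
    rw [norm_smul, RCLike.norm_ofReal, abs_of_nonneg (hw0 a ha)]
    calc w a * ‖star (x a - xbar) * m * (x a - xbar)‖
        ≤ w a * (‖x a - xbar‖ * ‖m‖ * ‖x a - xbar‖) :=
          mul_le_mul_of_nonneg_left (norm_star_mul_mul_le _ _ _) (hw0 a ha)
      _ = w a * ‖x a - xbar‖ ^ 2 * ‖m‖ := by ring
  rw [hsplit]
  exact (norm_add_le _ _).trans (add_le_add hvar (norm_star_mul_mul_sub_star_mul_mul_le m xbar u))

end StarAlgebra

namespace Matrix

variable {n : Type*} [Fintype n]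

theorem trace_mul_mul_conjTranspose_mul {α : Type*} [CommSemiring α] [StarRing α]
    (V ρ M : Matrix n n α) : (V * ρ * Vᴴ * M).trace = (ρ * (Vᴴ * M * V)).trace := by
  rw [Matrix.mul_assoc (V * ρ), trace_mul_comm, ← Matrix.mul_assoc, trace_mul_comm]

variable [DecidableEq n]

theorem norm_star_dotProduct_mulVec_le (C : Matrix n n ℂ) (x : n → ℂ) :
    ‖star x ⬝ᵥ C *ᵥ x‖ ≤ ‖C‖ * ‖WithLp.toLp 2 x‖ ^ 2 := by
  have hinner : star x ⬝ᵥ C *ᵥ x = inner ℂ (WithLp.toLp 2 x) (WithLp.toLp 2 (C *ᵥ x)) := by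
    rw [EuclideanSpace.inner_toLp_toLp, dotProduct_comm]
  have hC : ‖WithLp.toLp 2 (C *ᵥ x)‖ ≤ ‖C‖ * ‖WithLp.toLp 2 x‖ :=
    l2_opNorm_mulVec C (WithLp.toLp 2 x)
  calc ‖star x ⬝ᵥ C *ᵥ x‖ ≤ ‖WithLp.toLp 2 x‖ * ‖WithLp.toLp 2 (C *ᵥ x)‖ :=
        hinner ▸ norm_inner_le_norm _ _
    _ ≤ ‖WithLp.toLp 2 x‖ * (‖C‖ * ‖WithLp.toLp 2 x‖) := by gcongr
    _ = ‖C‖ * ‖WithLp.toLp 2 x‖ ^ 2 := by ring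

theorem PosSemidef.norm_trace_mul_le {ρ : Matrix n n ℂ} (hρ : ρ.PosSemidef) (C : Matrix n n ℂ) :
    ‖(ρ * C).trace‖ ≤ ‖C‖ * ρ.trace.re := by
  open scoped MatrixOrder in
  obtain ⟨B, rfl⟩ := CStarAlgebra.nonneg_iff_eq_star_mul_self.mp hρ.nonneg
  have hdiag : ∀ i, (B * C * Bᴴ) i i = star (star (B i)) ⬝ᵥ C *ᵥ star (B i) := by
    intro i
    rw [mul_mul_apply, star_star]
    rfl
  have hrow : ∀ i, ‖WithLp.toLp 2 (star (B i))‖ ^ 2 = ((B * Bᴴ) i i).re := by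
    intro i
    rw [@norm_sq_eq_re_inner ℂ, EuclideanSpace.inner_toLp_toLp, star_star, mul_apply',
      dotProduct_comm]
    rfl
  rw [star_eq_conjTranspose, Matrix.mul_assoc, trace_mul_comm, Matrix.mul_assoc,
    trace_mul_comm Bᴴ, trace, trace, re_sum, Finset.mul_sum]
  refine (norm_sum_le _ _).trans (Finset.sum_le_sum fun i _ => ?_)
  rw [diag_apply, diag_apply, ← hrow, ← Matrix.mul_assoc, hdiag]
  exact norm_star_dotProduct_mulVec_le C _

end Matrix

theorem stmt_19 {n k : ℕ} (W : Fin k → Matrix (Fin n) (Fin n) ℂ)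
    (hW : ∀ a, W a ∈ Matrix.unitaryGroup (Fin n) ℂ)
    (q : Fin k → ℝ) (hq0 : ∀ a, 0 ≤ q a) (hq1 : ∑ a, q a = 1)
    (M : Matrix (Fin n) (Fin n) ℂ)
    (ρ : Matrix (Fin n) (Fin n) ℂ) (hρ : ρ.PosSemidef) (hρ1 : ρ.trace = 1)
    (U : Matrix (Fin n) (Fin n) ℂ) (hU : U ∈ Matrix.unitaryGroup (Fin n) ℂ)
    (Wbar : Matrix (Fin n) (Fin n) ℂ) (hWbar : Wbar = ∑ a, (q a : ℂ) • W a)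
    (δ : ℝ) (hδ : δ = ∑ a, q a * ‖W a - Wbar‖ ^ 2) :
    ‖(∑ a, (q a : ℂ) * (W a * ρ * (W a)ᴴ * M).trace)
        - (U * ρ * Uᴴ * M).trace‖ ≤ (δ + 2 * ‖Wbar - U‖) * ‖M‖ := by
  have hWbar1 : ‖Wbar‖ ≤ 1 := hWbar ▸ norm_sum_ofReal_smul_le_one (fun a _ => hq0 a) hq1
    fun a _ => norm_le_one_of_mem_unitary (hW a)
  have hU1 : ‖U‖ ≤ 1 := norm_le_one_of_mem_unitary hU
  have htrace : (∑ a, (q a : ℂ) * (W a * ρ * (W a)ᴴ * M).trace) - (U * ρ * Uᴴ * M).trace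
      = (ρ * (∑ a, (q a : ℂ) • (star (W a) * M * W a) - star U * M * U)).trace := by
    simp only [trace_mul_mul_conjTranspose_mul, Matrix.mul_sub, Matrix.mul_sum, trace_sub,
      trace_sum, mul_smul_comm, trace_smul, smul_eq_mul, star_eq_conjTranspose]
  rw [htrace]
  calc _ ≤ ‖∑ a, (q a : ℂ) • (star (W a) * M * W a) - star U * M * U‖ * ρ.trace.re :=
        hρ.norm_trace_mul_le _
    _ ≤ δ * ‖M‖ + ‖Wbar - U‖ * ‖M‖ * (‖Wbar‖ + ‖U‖) := by
        rw [hρ1, one_re, mul_one, hδ]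
        exact norm_sum_smul_star_mul_mul_sub_le (fun a _ => hq0 a) hq1 hWbar.symm M U
    _ ≤ δ * ‖M‖ + ‖Wbar - U‖ * ‖M‖ * (1 + 1) := by gcongr
    _ = (δ + 2 * ‖Wbar - U‖) * ‖M‖ := by ring
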